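/- Let P be the transition function of a finite MC over finite nonempty state type S and let B, G ⊆ S be such that B ∩ G = ∅ and no state of B has a path to G under P. Then for every state s and every n : ℕ, Pr_P^n(s, G) + APr_P^n(s, B, G) ≤ 1; consequently Prob_P(s,G) ≤ 1 − AProb_P(s,B,G). -/

import Mathlib

open scoped Classical BigOperators

/-- `n`-step reachability probability `Pr_P^n(s, G)`. -/
noncomputable def Pr {S : Type*} [Fintype S] (P : S → S → ℝ) : ℕ → S → Set S → ℝ
  | 0, s, G => if s ∈ G then 1 else 0
  | n + 1, s, G => if s ∈ G then 1 else ∑ t, P s t * Pr P n t G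

/-- Reachability probability `Prob_P(s, G) = ⨆ n, Pr_P^n(s, G)`. -/
noncomputable def Prob {S : Type*} [Fintype S] (P : S → S → ℝ) (s : S) (G : Set S) : ℝ :=
  ⨆ n : ℕ, Pr P n s G

/-- `C`-restriction of `P`: states outside `C` are made absorbing. -/
noncomputable def restrictMC {S : Type*} (C : Set S) (P : S → S → ℝ) (s t : S) : ℝ :=
  if s ∈ C then P s t else (if t = s then 1 else 0)

/-- `n`-step probability of reaching `B` while avoiding `G`. -/
noncomputable def APr {S : Type*} [Fintype S] (P : S → S → ℝ) : ℕ → S → Set S → Set S → ℝ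
  | 0, s, B, _ => if s ∈ B then 1 else 0
  | n + 1, s, B, G => if s ∈ B then 1 else if s ∈ G then 0 else ∑ t, P s t * APr P n t B G

/-- `AProb_P(s, B, G) = ⨆ n, APr_P^n(s, B, G)`. -/
noncomputable def AProb {S : Type*} [Fintype S] (P : S → S → ℝ) (s : S) (B G : Set S) : ℝ :=
  ⨆ n : ℕ, APr P n s B G

/-- `s` has a path to `G` under `P`. -/
def HasPathTo {S : Type*} (P : S → S → ℝ) (s : S) (G : Set S) : Prop :=
  ∃ (m : ℕ) (u : ℕ → S), u 0 = s ∧ (∀ i < m, 0 < P (u i) (u (i + 1))) ∧ u m ∈ G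

/-- `B_P(G)`: the set of states with no path to `G` under `P`. -/
def BSet {S : Type*} (P : S → S → ℝ) (G : Set S) : Set S :=
  {s | ¬ HasPathTo P s G}

/-- Transition function `P_r` of the instantiated MC `D_r` of a family `𝔓`. -/
noncomputable def Pinst {S K : Type*} [Fintype K] (𝔓 : S → K → ℝ) (r : K → S) (s t : S) : ℝ :=
  ∑ k, if r k = t then 𝔓 s k else 0

/-- Parameter `k` occurs at some state of `C`. -/
def OccursIn {S K : Type*} (𝔓 : S → K → ℝ) (C : Set S) (k : K) : Prop :=
  ∃ s ∈ C, 0 < 𝔓 s k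

/-- `u` is reachable from `s0` under `P`. -/
def ReachableFrom {S : Type*} (P : S → S → ℝ) (s0 u : S) : Prop :=
  ∃ (m : ℕ) (v : ℕ → S), v 0 = s0 ∧ (∀ i < m, 0 < P (v i) (v (i + 1))) ∧ v m = u

/-!
States of `B` cannot reach `G`, so from them the reach probability vanishes while the
avoid-reach probability is `1`; states of `G` give the values the other way round. Elsewhere
both quantities are the same `P`-weighted average of their values one step later, so
`Pr_P^n + APr_P^n ≤ 1` propagates by induction on `n`. Both sequences increase in `n`, so
the bound passes to the suprema.
-/

lemma ciSup_le_sub_ciSup {ι : Type*} [Nonempty ι] [SemilatticeSup ι] {a b : ι → ℝ} {c : ℝ}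
    (ha : Monotone a) (hb : Monotone b) (h : ∀ i, a i + b i ≤ c) :
    ⨆ i, a i ≤ c - ⨆ i, b i :=
  ciSup_le fun i => le_sub_comm.mp <| ciSup_le fun j => by
    have := h (i ⊔ j)
    linarith [ha (le_sup_left : i ≤ i ⊔ j), hb (le_sup_right : j ≤ i ⊔ j)]

section MarkovChain

variable {S : Type*} {P : S → S → ℝ} {s t : S} {B G : Set S}

lemma HasPathTo.of_mem (h : s ∈ G) : HasPathTo P s G :=
  ⟨0, fun _ => s, rfl, by simp, h⟩

lemma HasPathTo.cons (hst : 0 < P s t) (h : HasPathTo P t G) : HasPathTo P s G := by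
  obtain ⟨m, u, hu0, hstep, hum⟩ := h
  refine ⟨m + 1, fun i => if i = 0 then s else u (i - 1), rfl, ?_, by simpa using hum⟩
  rintro (_ | i) hi
  · simpa [hu0] using hst
  · simpa using hstep i (by omega)

variable [Fintype S]

lemma sum_mul_le_one (hP0 : ∀ s t, 0 ≤ P s t) (hP1 : ∀ s, ∑ t, P s t = 1) {f : S → ℝ}
    (hf : ∀ t, f t ≤ 1) : ∑ t, P s t * f t ≤ 1 :=
  calc ∑ t, P s t * f t ≤ ∑ t, P s t * 1 :=
        Finset.sum_le_sum fun t _ => mul_le_mul_of_nonneg_left (hf t) (hP0 s t)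
    _ = 1 := by simp [hP1 s]

lemma Pr_nonneg (hP0 : ∀ s t, 0 ≤ P s t) (n : ℕ) (s : S) : 0 ≤ Pr P n s G := by
  induction n generalizing s with
  | zero => unfold Pr; positivity
  | succ n ih =>
    unfold Pr
    split_ifs
    exacts [zero_le_one, Finset.sum_nonneg fun t _ => mul_nonneg (hP0 s t) (ih t)]

lemma APr_nonneg (hP0 : ∀ s t, 0 ≤ P s t) (n : ℕ) (s : S) : 0 ≤ APr P n s B G := by
  induction n generalizing s with
  | zero => unfold APr; positivity
  | succ n ih =>
    unfold APr
    split_ifs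
    exacts [zero_le_one, le_rfl, Finset.sum_nonneg fun t _ => mul_nonneg (hP0 s t) (ih t)]

lemma Pr_monotone (hP0 : ∀ s t, 0 ≤ P s t) : Monotone fun n => Pr P n s G := by
  refine monotone_nat_of_le_succ fun n => ?_
  induction n generalizing s with
  | zero =>
    simp only [Pr]
    split_ifs
    exacts [le_rfl, Finset.sum_nonneg fun t _ => mul_nonneg (hP0 s t) (Pr_nonneg hP0 0 t)]
  | succ n ih =>
    simp only [Pr] at ih ⊢
    split_ifs
    exacts [le_rfl, Finset.sum_le_sum fun t _ => mul_le_mul_of_nonneg_left ih (hP0 s t)]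

lemma APr_monotone (hP0 : ∀ s t, 0 ≤ P s t) : Monotone fun n => APr P n s B G := by
  refine monotone_nat_of_le_succ fun n => ?_
  induction n generalizing s with
  | zero =>
    simp only [APr]
    split_ifs
    exacts [le_rfl, le_rfl,
      Finset.sum_nonneg fun t _ => mul_nonneg (hP0 s t) (APr_nonneg (B := B) (G := G) hP0 0 t)]
  | succ n ih =>
    simp only [APr] at ih ⊢
    split_ifs
    exacts [le_rfl, le_rfl, Finset.sum_le_sum fun t _ => mul_le_mul_of_nonneg_left ih (hP0 s t)]

lemma Pr_eq_zero_of_not_hasPathTo (hP0 : ∀ s t, 0 ≤ P s t) (hs : ¬HasPathTo P s G) (n : ℕ) :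
    Pr P n s G = 0 := by
  induction n generalizing s with
  | zero => simp [Pr, mt HasPathTo.of_mem hs]
  | succ n ih =>
    simp only [Pr, if_neg (mt HasPathTo.of_mem hs)]
    refine Finset.sum_eq_zero fun t _ => ?_
    rcases (hP0 s t).lt_or_eq with hst | hst
    · rw [ih fun h => hs (h.cons hst), mul_zero]
    · rw [← hst, zero_mul]

lemma APr_of_mem (hs : s ∈ B) (n : ℕ) : APr P n s B G = 1 := by
  cases n <;> simp [APr, hs]

lemma Pr_add_APr_eq_one_of_mem (hP0 : ∀ s t, 0 ≤ P s t) (hnopath : ∀ s ∈ B, ¬HasPathTo P s G)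
    (hs : s ∈ B) (n : ℕ) : Pr P n s G + APr P n s B G = 1 := by
  rw [Pr_eq_zero_of_not_hasPathTo hP0 (hnopath s hs), APr_of_mem hs, zero_add]

theorem Pr_add_APr_le_one (hP0 : ∀ s t, 0 ≤ P s t) (hP1 : ∀ s, ∑ t, P s t = 1)
    (hnopath : ∀ s ∈ B, ¬HasPathTo P s G) (n : ℕ) (s : S) :
    Pr P n s G + APr P n s B G ≤ 1 := by
  by_cases hB : s ∈ B
  · exact (Pr_add_APr_eq_one_of_mem hP0 hnopath hB n).le
  induction n generalizing s with
  | zero => by_cases hG : s ∈ G <;> simp [Pr, APr, hB, hG]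
  | succ n ih =>
    by_cases hG : s ∈ G
    · simp [Pr, APr, hB, hG]
    simp only [Pr, APr, if_neg hB, if_neg hG, ← Finset.sum_add_distrib, ← mul_add]
    refine sum_mul_le_one hP0 hP1 fun t => ?_
    by_cases htB : t ∈ B
    exacts [(Pr_add_APr_eq_one_of_mem hP0 hnopath htB n).le, ih t htB]

end MarkovChain

theorem stmt_12_general {S : Type*} [Fintype S] (P : S → S → ℝ)
    (hP0 : ∀ s t, 0 ≤ P s t) (hP1 : ∀ s, ∑ t, P s t = 1)
    (B G : Set S) (hnopath : ∀ s ∈ B, ¬ HasPathTo P s G)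
    (s : S) (n : ℕ) :
    Pr P n s G + APr P n s B G ≤ 1 ∧
    Prob P s G ≤ 1 - AProb P s B G := by
  have hsum := Pr_add_APr_le_one hP0 hP1 hnopath (s := s)
  exact ⟨hsum n, ciSup_le_sub_ciSup (Pr_monotone hP0) (APr_monotone hP0) hsum⟩

/-- reach- and avoid-reach probabilities sum to at most one. -/
theorem stmt_12 {S : Type*} [Fintype S] [Nonempty S] (P : S → S → ℝ)
    (hP0 : ∀ s t, 0 ≤ P s t) (hP1 : ∀ s, ∑ t, P s t = 1)
    (B G : Set S) (hBG : B ∩ G = ∅) (hnopath : ∀ s ∈ B, ¬ HasPathTo P s G)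
    (s : S) (n : ℕ) :
    Pr P n s G + APr P n s B G ≤ 1 ∧
    Prob P s G ≤ 1 - AProb P s B G :=
  stmt_12_general P hP0 hP1 B G hnopath s n
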